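/- arXiv:1504.05851 — 3 statements merged into one kernel-verified Lean document; each statement's English description precedes it below -/
import Mathlib

section
/- Suppose α ∈ ℝ^d satisfies |⟨α, k⟩| ≥ c/|k|^{d−1} for all nonzero k ∈ ℤ^d, for some c > 0. Then there exists c_α > 0 such that for all mean-zero f ∈ H¹(𝕋^d): ‖∇f‖_{L²(𝕋^d)}^{d−1} · ‖⟨∇f, α⟩‖_{L²(𝕋^d)} ≥ c_α·‖f‖_{L²(𝕋^d)}^{d}. -/
open Real
open scoped ENNReal NNReal

/- We model a mean-zero function `f ∈ H¹(𝕋^d)` on the flat torus `𝕋^d` by its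
Fourier coefficients `a : (Fin d → ℤ) → ℂ`, `f = Σ_{k} aₖ e^{ik·x}`, `a₀ = 0`.
By Parseval, `‖f‖²_{L²} = (2π)^d Σ |aₖ|²`, `‖∇f‖²_{L²} = (2π)^d Σ |k|²|aₖ|²` and
`‖⟨∇f,α⟩‖²_{L²} = (2π)^d Σ ⟨k,α⟩²|aₖ|²`.  All inequalities below are homogeneous
in the number of `L²`-norm factors, so the constant `(2π)^d` is harmlessly dropped. -/

/-- The Euclidean norm `|k|` of a lattice point `k ∈ ℤ^d`. -/
noncomputable def enorm' {d : ℕ} (k : Fin d → ℤ) : ℝ :=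
  Real.sqrt (∑ j, ((k j : ℝ)) ^ 2)

/-- `‖f‖²_{L²(𝕋^d)}` (modulo the factor `(2π)^d`). -/
noncomputable def normSq {d : ℕ} (a : (Fin d → ℤ) → ℂ) : ℝ := ∑' k, ‖a k‖ ^ 2

/-- `‖∇f‖²_{L²(𝕋^d)}` (modulo the factor `(2π)^d`). -/
noncomputable def gradSq {d : ℕ} (a : (Fin d → ℤ) → ℂ) : ℝ :=
  ∑' k, (∑ j, ((k j : ℝ)) ^ 2) * ‖a k‖ ^ 2

/-- `‖⟨∇f, α⟩‖²_{L²(𝕋^d)}` (modulo the factor `(2π)^d`). -/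
noncomputable def dirSq {d : ℕ} (α : Fin d → ℝ) (a : (Fin d → ℤ) → ℂ) : ℝ :=
  ∑' k, (∑ j, α j * k j) ^ 2 * ‖a k‖ ^ 2

/-- `f ∈ H¹(𝕋^d)`. -/
def IsH1 {d : ℕ} (a : (Fin d → ℤ) → ℂ) : Prop :=
  Summable (fun k : Fin d → ℤ => ‖a k‖ ^ 2) ∧
  Summable (fun k : Fin d → ℤ => (∑ j, ((k j : ℝ)) ^ 2) * ‖a k‖ ^ 2)
lemma holder_tsum {ι : Type*} (w f : ι → ℝ≥0∞) {p : ℝ} (hp : 1 ≤ p) :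
    ∑' i, w i * f i ≤ (∑' i, w i) ^ (1 - p⁻¹) * (∑' i, w i * f i ^ p) ^ p⁻¹ := by
  have h1 : (0:ℝ) ≤ 1 - p⁻¹ := by
    have : p⁻¹ ≤ 1 := inv_le_one_of_one_le₀ hp
    linarith
  have h2 : (0:ℝ) ≤ p⁻¹ := by positivity
  rw [ENNReal.tsum_eq_iSup_sum]
  refine iSup_le fun s => (ENNReal.inner_le_weight_mul_Lp_of_nonneg s hp w f).trans ?_
  exact mul_le_mul' (ENNReal.rpow_le_rpow (ENNReal.sum_le_tsum s) h1)
    (ENNReal.rpow_le_rpow (ENNReal.sum_le_tsum s) h2)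

/-- If `|⟨α,k⟩| ≥ c/|k|^{d-1}` for all nonzero `k ∈ ℤ^d`, then there is `c_α > 0`
with `‖∇f‖^{d-1} ⬝ ‖⟨∇f,α⟩‖ ≥ c_α ‖f‖^d` for all mean-zero `f ∈ H¹(𝕋^d)`. -/
theorem stmt_4 (d : ℕ) (hd : 0 < d) (α : Fin d → ℝ) (c : ℝ) (hc : 0 < c)
    (hα : ∀ k : Fin d → ℤ, k ≠ 0 → |∑ j, α j * k j| ≥ c / enorm' k ^ (d - 1)) :
    ∃ cα > (0 : ℝ), ∀ a : (Fin d → ℤ) → ℂ, IsH1 a → a 0 = 0 →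
      Real.sqrt (gradSq a) ^ (d - 1) * Real.sqrt (dirSq α a)
        ≥ cα * Real.sqrt (normSq a) ^ d := by
  refine ⟨c, hc, fun a ha h0 => ?_⟩
  -- notation
  set S : (Fin d → ℤ) → ℝ := fun k => ∑ j, ((k j : ℝ)) ^ 2 with hS
  set W : (Fin d → ℤ) → ℝ := fun k => (∑ j, α j * k j) ^ 2 with hW
  set b : (Fin d → ℤ) → ℝ := fun k => ‖a k‖ ^ 2 with hb
  have hSnn : ∀ k, 0 ≤ S k := fun k => Finset.sum_nonneg fun j _ => sq_nonneg _
  have hbnn : ∀ k, 0 ≤ b k := fun k => sq_nonneg _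
  have hWnn : ∀ k, 0 ≤ W k := fun k => sq_nonneg _
  have hSpos : ∀ k : Fin d → ℤ, k ≠ 0 → 0 < S k := by
    intro k hk
    obtain ⟨j, hj⟩ : ∃ j, k j ≠ 0 := by
      by_contra h
      push_neg at h
      exact hk (funext h)
    refine Finset.sum_pos' (fun j _ => sq_nonneg _) ⟨j, Finset.mem_univ j, ?_⟩
    have : (k j : ℝ) ≠ 0 := Int.cast_ne_zero.mpr hj
    positivity
  -- key pointwise inequality: c^2 ≤ W k * S k ^ (d-1) for k ≠ 0
  have hkey : ∀ k : Fin d → ℤ, k ≠ 0 → c ^ 2 ≤ W k * S k ^ (d - 1) := by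
    intro k hk
    have h1 := hα k hk
    have hSp := hSpos k hk
    have he : enorm' k ^ (d - 1) * enorm' k ^ (d - 1) = S k ^ (d - 1) := by
      rw [← pow_add, ← two_mul, pow_mul, enorm', Real.sq_sqrt (hSnn k)]
    have hepos : 0 < enorm' k ^ (d - 1) := by
      have : 0 < enorm' k := Real.sqrt_pos.mpr hSp
      positivity
    have h2 : c ≤ |∑ j, α j * k j| * enorm' k ^ (d - 1) := by
      rw [ge_iff_le, div_le_iff₀ hepos] at h1
      exact h1
    calc c ^ 2 ≤ (|∑ j, α j * k j| * enorm' k ^ (d - 1)) ^ 2 := by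
          apply sq_le_sq' <;> nlinarith [abs_nonneg (∑ j, α j * k j), hepos.le]
      _ = W k * S k ^ (d - 1) := by
          rw [mul_pow, sq_abs, ← he]; ring
  -- summability of W * b
  have hsumW : Summable (fun k : Fin d → ℤ => W k * b k) := by
    have hCS : ∀ k : Fin d → ℤ, W k * b k ≤ (∑ j, α j ^ 2) * (S k * b k) := by
      intro k
      have h2 : W k ≤ (∑ j, α j ^ 2) * S k := by
        have h3 := Finset.sum_mul_sq_le_sq_mul_sq (Finset.univ : Finset (Fin d))
          α (fun j => (k j : ℝ))
        simpa [hW, hS, pow_two] using h3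
      have := mul_le_mul_of_nonneg_right h2 (hbnn k)
      linarith [this]
    exact Summable.of_nonneg_of_le (fun k => mul_nonneg (hWnn k) (hbnn k)) hCS
      (ha.2.mul_left _)
  -- ENNReal setup
  set w : (Fin d → ℤ) → ℝ≥0∞ := fun k => ENNReal.ofReal (S k * b k) with hw
  set f : (Fin d → ℤ) → ℝ≥0∞ := fun k => (ENNReal.ofReal (S k))⁻¹ with hf
  have hA : ∀ k, w k * f k = ENNReal.ofReal (b k) := by
    intro k
    by_cases hk : k = 0
    · subst hk
      simp [hw, hb, h0]
    · have hSp := hSpos k hk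
      show ENNReal.ofReal (S k * b k) * (ENNReal.ofReal (S k))⁻¹ = ENNReal.ofReal (b k)
      rw [ENNReal.ofReal_mul (hSnn k), mul_comm (ENNReal.ofReal (S k)) _,
        mul_assoc, ENNReal.mul_inv_cancel (by simpa [ENNReal.ofReal_pos] using hSp)
          ENNReal.ofReal_ne_top, mul_one]
  have hB : ∀ k, w k * f k ^ (d : ℝ) ≤ ENNReal.ofReal (W k * b k * (c ^ 2)⁻¹) := by
    intro k
    by_cases hk : k = 0
    · subst hk
      simp [hw, hb, h0]
    · have hSp := hSpos k hk
      have hfk : f k ^ (d : ℝ) = ENNReal.ofReal ((S k ^ d)⁻¹) := by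
        show (ENNReal.ofReal (S k))⁻¹ ^ (d : ℝ) = ENNReal.ofReal ((S k ^ d)⁻¹)
        rw [ENNReal.inv_rpow, ENNReal.ofReal_rpow_of_pos hSp, Real.rpow_natCast,
          ← ENNReal.ofReal_inv_of_pos (by positivity)]
      show ENNReal.ofReal (S k * b k) * f k ^ (d:ℝ) ≤ _
      rw [hfk, ← ENNReal.ofReal_mul (mul_nonneg (hSnn k) (hbnn k))]
      apply ENNReal.ofReal_le_ofReal
      -- real inequality: S*b/S^d ≤ W*b/c^2
      have hkey' := hkey k hk
      have hd' : S k ^ d = S k * S k ^ (d - 1) := by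
        conv_lhs => rw [← Nat.sub_add_cancel hd]
        rw [pow_succ]
        ring
      rw [hd']
      have hSd : 0 < S k ^ (d - 1) := by positivity
      rw [mul_inv, ← mul_assoc, mul_comm (S k) (b k), mul_assoc (b k),
        mul_inv_cancel₀ hSp.ne', mul_one]
      rw [← div_eq_mul_inv, ← div_eq_mul_inv, div_le_div_iff₀ hSd (by positivity)]
      nlinarith [mul_le_mul_of_nonneg_right hkey' (hbnn k), hbnn k, hWnn k, hSd.le]
  -- assemble sums
  have hsumWc : Summable (fun k : Fin d → ℤ => W k * b k * (c ^ 2)⁻¹) := hsumW.mul_right _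
  have e1 : ∑' k, w k * f k = ENNReal.ofReal (normSq a) := by
    rw [normSq, ENNReal.ofReal_tsum_of_nonneg hbnn ha.1]
    exact tsum_congr hA
  have e2 : ∑' k, w k = ENNReal.ofReal (gradSq a) := by
    rw [gradSq, ENNReal.ofReal_tsum_of_nonneg (fun k => mul_nonneg (hSnn k) (hbnn k)) ha.2]
  have e3 : ∑' k, w k * f k ^ (d : ℝ) ≤ ENNReal.ofReal (dirSq α a * (c ^ 2)⁻¹) := by
    calc ∑' k, w k * f k ^ (d : ℝ)
        ≤ ∑' k, ENNReal.ofReal (W k * b k * (c ^ 2)⁻¹) := ENNReal.tsum_le_tsum hB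
      _ = ENNReal.ofReal (∑' k, W k * b k * (c ^ 2)⁻¹) :=
          (ENNReal.ofReal_tsum_of_nonneg
            (fun k => mul_nonneg (mul_nonneg (hWnn k) (hbnn k)) (by positivity)) hsumWc).symm
      _ = ENNReal.ofReal (dirSq α a * (c ^ 2)⁻¹) := by rw [dirSq, tsum_mul_right]
  have hp1 : (1 : ℝ) ≤ (d : ℝ) := by exact_mod_cast hd
  have hexp1 : (0:ℝ) ≤ 1 - (d:ℝ)⁻¹ := by
    have : (d:ℝ)⁻¹ ≤ 1 := inv_le_one_of_one_le₀ hp1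
    linarith
  have hH := holder_tsum w f hp1
  rw [e1, e2] at hH
  have hH2 : ENNReal.ofReal (normSq a) ≤ (ENNReal.ofReal (gradSq a)) ^ (1 - (d:ℝ)⁻¹) *
      (ENNReal.ofReal (dirSq α a * (c ^ 2)⁻¹)) ^ ((d:ℝ)⁻¹) :=
    hH.trans (mul_le_mul' le_rfl (ENNReal.rpow_le_rpow e3 (by positivity)))
  have hGnn : 0 ≤ gradSq a := tsum_nonneg fun k => mul_nonneg (hSnn k) (hbnn k)
  have hDnn : 0 ≤ dirSq α a := tsum_nonneg fun k => mul_nonneg (hWnn k) (hbnn k)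
  have hNnn : 0 ≤ normSq a := tsum_nonneg fun k => hbnn k
  have hreal : normSq a ≤ gradSq a ^ (1 - (d:ℝ)⁻¹) * (dirSq α a * (c ^ 2)⁻¹) ^ ((d:ℝ)⁻¹) := by
    have h1 := ENNReal.toReal_mono (ENNReal.mul_ne_top
      (ENNReal.rpow_ne_top_of_nonneg hexp1 ENNReal.ofReal_ne_top)
      (ENNReal.rpow_ne_top_of_nonneg (by positivity) ENNReal.ofReal_ne_top)) hH2
    rw [ENNReal.toReal_mul, ← ENNReal.toReal_rpow, ← ENNReal.toReal_rpow,
      ENNReal.toReal_ofReal hNnn, ENNReal.toReal_ofReal hGnn,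
      ENNReal.toReal_ofReal (by positivity)] at h1
    exact h1
  -- final real computation
  have hcast : ((d - 1 : ℕ) : ℝ) = (d : ℝ) - 1 := by
    rw [Nat.cast_sub hd]; simp
  have hsG : Real.sqrt (gradSq a) ^ (d - 1) = gradSq a ^ (((d:ℝ) - 1) / 2) := by
    rw [Real.sqrt_eq_rpow, ← Real.rpow_natCast (gradSq a ^ ((1:ℝ)/2)) (d - 1),
      ← Real.rpow_mul hGnn, hcast]
    congr 1
    ring
  have hsN : Real.sqrt (normSq a) ^ d = normSq a ^ ((d:ℝ) / 2) := by
    rw [Real.sqrt_eq_rpow, ← Real.rpow_natCast (normSq a ^ ((1:ℝ)/2)) d,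
      ← Real.rpow_mul hNnn]
    congr 1
    ring
  have hsD : (dirSq α a * (c ^ 2)⁻¹) ^ ((1:ℝ)/2) = Real.sqrt (dirSq α a) / c := by
    rw [← Real.sqrt_eq_rpow, Real.sqrt_mul hDnn, Real.sqrt_inv, Real.sqrt_sq hc.le,
      div_eq_mul_inv]
  have hNle : normSq a ^ ((d:ℝ)/2) ≤
      (gradSq a ^ (1 - (d:ℝ)⁻¹) * (dirSq α a * (c ^ 2)⁻¹) ^ ((d:ℝ)⁻¹)) ^ ((d:ℝ)/2) :=
    Real.rpow_le_rpow hNnn hreal (by positivity)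
  have hdne : (d:ℝ) ≠ 0 := by positivity
  have hrw : (gradSq a ^ (1 - (d:ℝ)⁻¹) * (dirSq α a * (c ^ 2)⁻¹) ^ ((d:ℝ)⁻¹)) ^ ((d:ℝ)/2)
      = gradSq a ^ (((d:ℝ) - 1) / 2) * (dirSq α a * (c ^ 2)⁻¹) ^ ((1:ℝ)/2) := by
    have ea : (1 - (d:ℝ)⁻¹) * ((d:ℝ)/2) = ((d:ℝ) - 1)/2 := by
      field_simp
    have eb : (d:ℝ)⁻¹ * ((d:ℝ)/2) = (1:ℝ)/2 := by
      field_simp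
    rw [Real.mul_rpow (Real.rpow_nonneg hGnn _) (Real.rpow_nonneg (by positivity) _),
      ← Real.rpow_mul hGnn, ← Real.rpow_mul (by positivity), ea, eb]
  rw [ge_iff_le, hsG, hsN]
  calc c * normSq a ^ ((d:ℝ)/2)
      ≤ c * (gradSq a ^ (((d:ℝ) - 1) / 2) * (Real.sqrt (dirSq α a) / c)) := by
        apply mul_le_mul_of_nonneg_left _ hc.le
        rw [← hsD, ← hrw]
        exact hNle
    _ = gradSq a ^ (((d:ℝ) - 1) / 2) * Real.sqrt (dirSq α a) := by
        field_simp
end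

section
/- Let β₁, …, β_ℓ ∈ ℝ^{d−1} (with 1 ≤ ℓ ≤ d−1) define linear forms L_i(x) = ⟨β_i, x⟩ that form a badly approximable system: there is c > 0 with max_i ‖L_i(x)‖ ≥ c·(max_j |x_j|)^{−(d−1)/ℓ} for all nonzero x ∈ ℤ^{d−1}, where ‖·‖ is distance to the nearest integer. Set α_i = (1, β_i) ∈ ℝ^d. Then there exists c_α > 0 such that for all mean-zero f ∈ H¹(𝕋^d): ‖∇f‖_{L²(𝕋^d)}^{d−1}·(Σ_{i=1}^{ℓ} ‖⟨∇f, α_i⟩‖_{L²(𝕋^d)})^{ℓ} ≥ c_α·‖f‖_{L²(𝕋^d)}^{d−1+ℓ}. -/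
open Real

lemma my_sqrt_pow (x : ℝ) (hx : 0 ≤ x) (n : ℕ) : Real.sqrt (x ^ n) = Real.sqrt x ^ n := by
  rw [Real.sqrt_eq_rpow, Real.sqrt_eq_rpow, ← Real.rpow_natCast (x ^ ((1:ℝ)/2)) n,
    ← Real.rpow_natCast x n, ← Real.rpow_mul hx, ← Real.rpow_mul hx, mul_comm]

lemma my_sqrt_sum_le {n : ℕ} (f : Fin n → ℝ) (hf : ∀ i, 0 ≤ f i) :
    Real.sqrt (∑ i, f i) ≤ ∑ i, Real.sqrt (f i) := by
  have h1 : ∑ i, f i ≤ (∑ i, Real.sqrt (f i)) ^ 2 := by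
    calc ∑ i, f i = ∑ i, Real.sqrt (f i) ^ 2 := by
          refine Finset.sum_congr rfl fun i _ => ?_
          rw [Real.sq_sqrt (hf i)]
      _ ≤ _ := Finset.sum_sq_le_sq_sum_of_nonneg (fun i _ => Real.sqrt_nonneg _)
  calc Real.sqrt (∑ i, f i) ≤ Real.sqrt ((∑ i, Real.sqrt (f i)) ^ 2) := Real.sqrt_le_sqrt h1
    _ = _ := Real.sqrt_sq (Finset.sum_nonneg fun i _ => Real.sqrt_nonneg _)

lemma my_key (m ℓ : ℕ) (hℓ : 1 ≤ ℓ) (hm : ℓ ≤ m)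
    (β : Fin ℓ → Fin m → ℝ) (c : ℝ) (hc : 0 < c)
    (hbad : ∀ x : Fin m → ℤ, x ≠ 0 → ∃ i : Fin ℓ,
      |(∑ j, β i j * x j) - round (∑ j, β i j * x j)|
        ≥ c * (⨆ j : Fin m, (|x j| : ℝ)) ^ (-((m : ℝ) / ℓ)))
    (k : Fin (m + 1) → ℤ) (hk : k ≠ 0) :
    min 1 (c ^ (2 * ℓ)) ≤ (∑ j, ((k j : ℝ)) ^ 2) ^ m *
      (∑ i : Fin ℓ, (∑ j, (Fin.cons 1 (β i) : Fin (m+1) → ℝ) j * (k j : ℝ)) ^ 2) ^ ℓ := by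
  have hℓR : (1:ℝ) ≤ (ℓ : ℝ) := by exact_mod_cast hℓ
  have hinner : ∀ i : Fin ℓ, (∑ j, (Fin.cons 1 (β i) : Fin (m+1) → ℝ) j * (k j : ℝ))
      = (k 0 : ℝ) + ∑ j : Fin m, β i j * (k j.succ : ℝ) := by
    intro i
    rw [Fin.sum_univ_succ]
    simp
  set x : Fin m → ℤ := fun j => k j.succ with hxdef
  by_cases hx : x = 0
  · -- tail is zero, so k 0 ≠ 0
    have hk0 : k 0 ≠ 0 := by
      intro h
      apply hk
      funext j
      refine Fin.cases ?_ ?_ j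
      · exact h
      · intro j'
        exact congrFun hx j'
    have habs : (1:ℝ) ≤ ((k 0 : ℝ)) ^ 2 := by
      have h1 : (1:ℤ) ≤ |k 0| := Int.one_le_abs hk0
      have h2 : (1:ℝ) ≤ |(k 0 : ℝ)| := by
        have : (1:ℝ) ≤ ((|k 0| : ℤ) : ℝ) := by exact_mod_cast h1
        rwa [Int.cast_abs] at this
      rw [← sq_abs]
      nlinarith [h2]
    have hq : (1:ℝ) ≤ ∑ j, ((k j : ℝ)) ^ 2 :=
      le_trans habs (Finset.single_le_sum (f := fun j => ((k j : ℝ))^2)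
        (fun j _ => sq_nonneg _) (Finset.mem_univ 0))
    have hS : (1:ℝ) ≤ ∑ i : Fin ℓ, (∑ j, (Fin.cons 1 (β i) : Fin (m+1) → ℝ) j * (k j : ℝ)) ^ 2 := by
      have hcontrib : ∀ i : Fin ℓ, (∑ j, (Fin.cons 1 (β i) : Fin (m+1) → ℝ) j * (k j : ℝ)) = (k 0 : ℝ) := by
        intro i
        rw [hinner i]
        have : ∀ j : Fin m, β i j * (k j.succ : ℝ) = 0 := by
          intro j
          have : x j = 0 := congrFun hx j
          rw [hxdef] at this
          simp [this]
        rw [Finset.sum_congr rfl fun j _ => this j]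
        simp
      have i0 : Fin ℓ := ⟨0, hℓ⟩
      have hsingle := Finset.single_le_sum (f := fun i : Fin ℓ => (∑ j, (Fin.cons 1 (β i) : Fin (m+1) → ℝ) j * (k j : ℝ))^2)
        (fun i _ => sq_nonneg _) (Finset.mem_univ i0)
      rw [hcontrib i0] at hsingle
      exact le_trans habs hsingle
    calc min 1 (c ^ (2*ℓ)) ≤ 1 := min_le_left _ _
      _ ≤ _ := one_le_mul_of_one_le_of_one_le (one_le_pow₀ hq) (one_le_pow₀ hS)
  · obtain ⟨i, hi⟩ := hbad x hx
    haveI : Nonempty (Fin m) := ⟨⟨0, by omega⟩⟩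
    set N := ⨆ j : Fin m, (|x j| : ℝ) with hNdef
    have hNb : ∀ j, (|x j| : ℝ) ≤ N := by
      intro j
      rw [hNdef]
      exact le_ciSup (Set.finite_range fun j : Fin m => (|x j| : ℝ)).bddAbove j
    obtain ⟨j₀, hj₀⟩ : ∃ j, x j ≠ 0 := Function.ne_iff.mp hx
    have hN1 : (1:ℝ) ≤ N := by
      refine le_trans ?_ (hNb j₀)
      exact_mod_cast Int.one_le_abs hj₀
    have hN0 : (0:ℝ) < N := lt_of_lt_of_le one_pos hN1
    obtain ⟨j₁, hj₁⟩ := exists_eq_ciSup_of_finite (f := fun j : Fin m => (|x j| : ℝ))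
    have hq : N ^ 2 ≤ ∑ j, ((k j : ℝ)) ^ 2 := by
      have e1 : N ^ 2 = ((x j₁ : ℝ)) ^ 2 := by
        rw [hNdef, ← hj₁, sq_abs]
      rw [e1, Fin.sum_univ_succ]
      have h2 : ((x j₁ : ℝ))^2 ≤ ∑ j : Fin m, ((k j.succ : ℝ))^2 :=
        Finset.single_le_sum (f := fun j : Fin m => ((k j.succ : ℝ))^2)
          (fun j _ => sq_nonneg _) (Finset.mem_univ j₁)
      nlinarith [sq_nonneg ((k 0 : ℝ))]
    have habs : c * N ^ (-((m:ℝ)/ℓ)) ≤ |(k 0 : ℝ) + ∑ j : Fin m, β i j * (x j : ℝ)| := by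
      refine le_trans hi ?_
      calc |(∑ j, β i j * (x j : ℝ)) - round (∑ j, β i j * (x j : ℝ))|
          ≤ |(∑ j, β i j * (x j : ℝ)) - ((-(k 0) : ℤ) : ℝ)| := round_le _ _
        _ = |(k 0 : ℝ) + ∑ j : Fin m, β i j * (x j : ℝ)| := by
            push_cast
            ring_nf
    have hS : (c * N ^ (-((m:ℝ)/ℓ))) ^ 2
        ≤ ∑ i' : Fin ℓ, (∑ j, (Fin.cons 1 (β i') : Fin (m+1) → ℝ) j * (k j : ℝ)) ^ 2 := by
      have hsingle := Finset.single_le_sum (f := fun i' : Fin ℓ => (∑ j, (Fin.cons 1 (β i') : Fin (m+1) → ℝ) j * (k j : ℝ))^2)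
        (fun i' _ => sq_nonneg _) (Finset.mem_univ i)
      rw [hinner i] at hsingle
      refine le_trans ?_ hsingle
      have h3 := pow_le_pow_left₀ (by positivity) habs 2
      rwa [sq_abs] at h3
    have hmain : (N ^ 2) ^ m * ((c * N ^ (-((m:ℝ)/ℓ))) ^ 2) ^ ℓ
        ≤ (∑ j, ((k j : ℝ)) ^ 2) ^ m *
          (∑ i' : Fin ℓ, (∑ j, (Fin.cons 1 (β i') : Fin (m+1) → ℝ) j * (k j : ℝ)) ^ 2) ^ ℓ := by
      refine mul_le_mul (pow_le_pow_left₀ (sq_nonneg N) hq m)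
        (pow_le_pow_left₀ (sq_nonneg _) hS ℓ) (by positivity)
        (pow_nonneg (Finset.sum_nonneg fun j _ => sq_nonneg _) m)
    have hcomp : (N ^ 2) ^ m * ((c * N ^ (-((m:ℝ)/ℓ))) ^ 2) ^ ℓ = c ^ (2 * ℓ) := by
      have hℓ0 : (ℓ:ℝ) ≠ 0 := by linarith
      have h2 : (N ^ (-((m:ℝ)/ℓ))) ^ (2:ℕ) = N ^ (-((m:ℝ)/ℓ) * 2) := by
        rw [← Real.rpow_natCast (N ^ (-((m:ℝ)/ℓ))) 2, ← Real.rpow_mul hN0.le]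
        norm_num
      have e1 : ((N ^ (-((m:ℝ)/ℓ))) ^ 2) ^ ℓ = N ^ (-(2 * (m:ℝ))) := by
        rw [h2, ← Real.rpow_natCast (N ^ (-((m:ℝ)/ℓ) * 2)) ℓ, ← Real.rpow_mul hN0.le]
        congr 1
        field_simp
      have e2 : (N ^ 2) ^ m = N ^ (2 * (m:ℝ)) := by
        rw [← pow_mul, ← Real.rpow_natCast N (2 * m)]
        congr 1
        push_cast
        ring
      rw [mul_pow, mul_pow, e1, e2, ← pow_mul c 2 ℓ,
        show N ^ (2*(m:ℝ)) * (c ^ (2*ℓ) * N ^ (-(2*(m:ℝ)))) =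
          c ^ (2*ℓ) * (N ^ (2*(m:ℝ)) * N ^ (-(2*(m:ℝ)))) from by ring,
        ← Real.rpow_add hN0]
      simp
    calc min 1 (c ^ (2*ℓ)) ≤ c ^ (2*ℓ) := min_le_right _ _
      _ = _ := hcomp.symm
      _ ≤ _ := hmain

lemma my_holder_pt {ι : Type*} (g h : ι → ℝ) (θ : ℝ) (hθ0 : 0 ≤ θ) (hθ1 : θ ≤ 1)
    (hg0 : ∀ k, 0 ≤ g k) (hh0 : ∀ k, 0 ≤ h k)
    (hG : 0 < ∑' k, g k) (hH : 0 < ∑' k, h k) (k : ι) :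
    g k ^ θ * h k ^ (1 - θ) ≤ (∑' k, g k) ^ θ * (∑' k, h k) ^ (1 - θ) *
      (θ * (g k / ∑' k, g k) + (1 - θ) * (h k / ∑' k, h k)) := by
  set G := ∑' k, g k
  set H := ∑' k, h k
  have hgm := Real.geom_mean_le_arith_mean2_weighted (w₁ := θ) (w₂ := 1 - θ)
    (p₁ := g k / G) (p₂ := h k / H) hθ0 (by linarith)
    (div_nonneg (hg0 k) hG.le) (div_nonneg (hh0 k) hH.le) (by ring)
  have e : g k ^ θ * h k ^ (1 - θ) = G ^ θ * H ^ (1 - θ) * ((g k / G) ^ θ * (h k / H) ^ (1 - θ)) := by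
    rw [Real.div_rpow (hg0 k) hG.le, Real.div_rpow (hh0 k) hH.le]
    have h1 : G ^ θ ≠ 0 := (Real.rpow_pos_of_pos hG θ).ne'
    have h2 : H ^ (1-θ) ≠ 0 := (Real.rpow_pos_of_pos hH (1-θ)).ne'
    field_simp
  rw [e]
  exact mul_le_mul_of_nonneg_left hgm (by positivity)

lemma my_holder_sum2 {ι : Type*} (g h : ι → ℝ) (θ : ℝ)
    (hgs : Summable g) (hhs : Summable h) (G H : ℝ) :
    Summable (fun k => G ^ θ * H ^ (1-θ) * (θ * (g k / G) + (1 - θ) * (h k / H))) :=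
  (((hgs.div_const G).mul_left θ).add ((hhs.div_const H).mul_left (1-θ))).mul_left _

lemma my_holder_summable {ι : Type*} (g h : ι → ℝ) (θ : ℝ) (hθ0 : 0 ≤ θ) (hθ1 : θ ≤ 1)
    (hg0 : ∀ k, 0 ≤ g k) (hh0 : ∀ k, 0 ≤ h k)
    (hgs : Summable g) (hhs : Summable h)
    (hG : 0 < ∑' k, g k) (hH : 0 < ∑' k, h k) :
    Summable (fun k => g k ^ θ * h k ^ (1 - θ)) :=
  Summable.of_nonneg_of_le (fun k => mul_nonneg (Real.rpow_nonneg (hg0 k) _) (Real.rpow_nonneg (hh0 k) _))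
    (my_holder_pt g h θ hθ0 hθ1 hg0 hh0 hG hH)
    (my_holder_sum2 g h θ hgs hhs _ _)

lemma my_holder {ι : Type*} (g h : ι → ℝ) (θ : ℝ) (hθ0 : 0 ≤ θ) (hθ1 : θ ≤ 1)
    (hg0 : ∀ k, 0 ≤ g k) (hh0 : ∀ k, 0 ≤ h k)
    (hgs : Summable g) (hhs : Summable h)
    (hG : 0 < ∑' k, g k) (hH : 0 < ∑' k, h k) :
    ∑' k, g k ^ θ * h k ^ (1 - θ) ≤ (∑' k, g k) ^ θ * (∑' k, h k) ^ (1 - θ) := by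
  set G := ∑' k, g k with hGdef
  set H := ∑' k, h k with hHdef
  calc ∑' k, g k ^ θ * h k ^ (1 - θ)
      ≤ ∑' k, G ^ θ * H ^ (1-θ) * (θ * (g k / G) + (1 - θ) * (h k / H)) :=
        Summable.tsum_le_tsum (my_holder_pt g h θ hθ0 hθ1 hg0 hh0 hG hH)
          (my_holder_summable g h θ hθ0 hθ1 hg0 hh0 hgs hhs hG hH)
          (my_holder_sum2 g h θ hgs hhs G H)
    _ = G ^ θ * H ^ (1-θ) * (θ * (G / G) + (1 - θ) * (H / H)) := by
        rw [tsum_mul_left, Summable.tsum_add ((hgs.div_const G).mul_left θ) ((hhs.div_const H).mul_left (1-θ)),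
          tsum_mul_left, tsum_mul_left, tsum_div_const, tsum_div_const]
    _ = G ^ θ * H ^ (1-θ) := by
        rw [div_self hG.ne', div_self hH.ne']
        ring


/-- Several ergodic directions.  Let `β₁, …, β_ℓ ∈ ℝ^m` (`1 ≤ ℓ ≤ m`, `d = m+1`)
give a badly approximable system of linear forms: for some `c > 0` and every
nonzero `x ∈ ℤ^m` some form `⟨βᵢ, x⟩` has distance `≥ c (max_j |x_j|)^{-m/ℓ}`
to the nearest integer.  With `αᵢ = (1, βᵢ) ∈ ℝ^{m+1}` there is `c_α > 0` with
`‖∇f‖^{m} (Σᵢ ‖⟨∇f, αᵢ⟩‖)^ℓ ≥ c_α ‖f‖^{m+ℓ}` for all mean-zero `f ∈ H¹(𝕋^{m+1})`. -/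
theorem stmt_16 (m ℓ : ℕ) (hℓ : 1 ≤ ℓ) (hm : ℓ ≤ m)
    (β : Fin ℓ → Fin m → ℝ) (c : ℝ) (hc : 0 < c)
    (hbad : ∀ x : Fin m → ℤ, x ≠ 0 → ∃ i : Fin ℓ,
      |(∑ j, β i j * x j) - round (∑ j, β i j * x j)|
        ≥ c * (⨆ j : Fin m, (|x j| : ℝ)) ^ (-((m : ℝ) / ℓ))) :
    ∃ cα > (0 : ℝ), ∀ a : (Fin (m + 1) → ℤ) → ℂ, IsH1 a → a 0 = 0 →
      Real.sqrt (gradSq a) ^ m *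
          (∑ i : Fin ℓ, Real.sqrt (dirSq (Fin.cons 1 (β i)) a)) ^ ℓ
        ≥ cα * Real.sqrt (normSq a) ^ (m + ℓ) := by
  have hC₀ : (0:ℝ) < min 1 (c ^ (2 * ℓ)) := lt_min one_pos (pow_pos hc _)
  refine ⟨Real.sqrt (min 1 (c ^ (2 * ℓ))), Real.sqrt_pos.mpr hC₀, ?_⟩
  intro a ha ha0
  obtain ⟨hsum, hgsum⟩ := ha
  have hℓR : (1:ℝ) ≤ (ℓ : ℝ) := by exact_mod_cast hℓ
  have hmR : (1:ℝ) ≤ (m : ℝ) := by exact_mod_cast le_trans hℓ hm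
  have hml : (0:ℝ) < (m:ℝ) + (ℓ:ℝ) := by linarith
  set C₀ := min 1 (c ^ (2 * ℓ)) with hC₀def
  set θ : ℝ := (m:ℝ) / ((m:ℝ) + (ℓ:ℝ)) with hθdef
  have hθ0 : 0 < θ := div_pos (by linarith) hml
  have hθ1 : θ < 1 := (div_lt_one hml).mpr (by linarith)
  -- abbreviations
  set g : (Fin (m+1) → ℤ) → ℝ := fun k => (∑ j, ((k j : ℝ)) ^ 2) * ‖a k‖ ^ 2 with hgdef
  set h : (Fin (m+1) → ℤ) → ℝ :=
    fun k => (∑ i : Fin ℓ, (∑ j, (Fin.cons 1 (β i) : Fin (m+1) → ℝ) j * (k j : ℝ)) ^ 2) * ‖a k‖ ^ 2 with hhdef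
  have hg0 : ∀ k, 0 ≤ g k := fun k =>
    mul_nonneg (Finset.sum_nonneg fun j _ => sq_nonneg _) (sq_nonneg _)
  have hh0 : ∀ k, 0 ≤ h k := fun k =>
    mul_nonneg (Finset.sum_nonneg fun i _ => sq_nonneg _) (sq_nonneg _)
  have hgs : Summable g := hgsum
  -- Cauchy–Schwarz bound for summability
  have hCS : ∀ (i : Fin ℓ) (k : Fin (m+1) → ℤ),
      (∑ j, (Fin.cons 1 (β i) : Fin (m+1) → ℝ) j * (k j : ℝ)) ^ 2
        ≤ (∑ j, ((Fin.cons 1 (β i) : Fin (m+1) → ℝ) j) ^ 2) * (∑ j, ((k j : ℝ)) ^ 2) :=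
    fun i k => Finset.sum_mul_sq_le_sq_mul_sq _ _ _
  have hhi : ∀ i : Fin ℓ, Summable
      (fun k : Fin (m+1) → ℤ => (∑ j, (Fin.cons 1 (β i) : Fin (m+1) → ℝ) j * (k j : ℝ)) ^ 2 * ‖a k‖ ^ 2) := by
    intro i
    refine Summable.of_nonneg_of_le (fun k => mul_nonneg (sq_nonneg _) (sq_nonneg _))
      (fun k => ?_) (hgs.mul_left (∑ j, ((Fin.cons 1 (β i) : Fin (m+1) → ℝ) j) ^ 2))
    calc (∑ j, (Fin.cons 1 (β i) : Fin (m+1) → ℝ) j * (k j : ℝ)) ^ 2 * ‖a k‖ ^ 2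
        ≤ ((∑ j, ((Fin.cons 1 (β i) : Fin (m+1) → ℝ) j) ^ 2) * (∑ j, ((k j : ℝ)) ^ 2)) * ‖a k‖ ^ 2 :=
          mul_le_mul_of_nonneg_right (hCS i k) (sq_nonneg _)
      _ = (∑ j, ((Fin.cons 1 (β i) : Fin (m+1) → ℝ) j) ^ 2) * g k := by rw [hgdef]; ring
  have hhs : Summable h := by
    have : h = fun k => ∑ i : Fin ℓ,
        (∑ j, (Fin.cons 1 (β i) : Fin (m+1) → ℝ) j * (k j : ℝ)) ^ 2 * ‖a k‖ ^ 2 := by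
      funext k
      simp only [hhdef]
      exact Finset.sum_mul _ _ _
    rw [this]
    exact summable_sum (fun i _ => hhi i)
  have hH_eq : ∑' k, h k = ∑ i : Fin ℓ, dirSq (Fin.cons 1 (β i)) a := by
    have e1 : ∀ k, h k = ∑ i : Fin ℓ,
        (∑ j, (Fin.cons 1 (β i) : Fin (m+1) → ℝ) j * (k j : ℝ)) ^ 2 * ‖a k‖ ^ 2 := by
      intro k
      simp only [hhdef]
      exact Finset.sum_mul _ _ _
    calc ∑' k, h k = ∑' k, ∑ i : Fin ℓ,
          (∑ j, (Fin.cons 1 (β i) : Fin (m+1) → ℝ) j * (k j : ℝ)) ^ 2 * ‖a k‖ ^ 2 := by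
          exact tsum_congr e1
      _ = ∑ i : Fin ℓ, ∑' k, (∑ j, (Fin.cons 1 (β i) : Fin (m+1) → ℝ) j * (k j : ℝ)) ^ 2 * ‖a k‖ ^ 2 :=
          Summable.tsum_finsetSum (fun i _ => hhi i)
      _ = ∑ i : Fin ℓ, dirSq (Fin.cons 1 (β i)) a := rfl
  -- trivial case: f = 0
  have hN0 : 0 ≤ normSq a := tsum_nonneg (fun k => sq_nonneg _)
  rcases hN0.lt_or_eq with hNpos | hNzero
  swap
  · rw [← hNzero, Real.sqrt_zero, zero_pow (by omega : m + ℓ ≠ 0), mul_zero]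
    exact mul_nonneg (pow_nonneg (Real.sqrt_nonneg _) _)
      (pow_nonneg (Finset.sum_nonneg fun i _ => Real.sqrt_nonneg _) _)
  -- nontrivial case
  obtain ⟨k₀, hk₀⟩ : ∃ k, a k ≠ 0 := by
    by_contra hall
    push_neg at hall
    have : normSq a = 0 := by
      unfold normSq
      have : (fun k : Fin (m+1) → ℤ => ‖a k‖ ^ 2) = fun _ => 0 := funext fun k => by simp [hall k]
      rw [this, tsum_zero]
    linarith
  have hk₀0 : k₀ ≠ 0 := fun e => hk₀ (by rw [e, ha0])
  have hp₀ : 0 < ‖a k₀‖ ^ 2 := pow_pos (norm_pos_iff.mpr hk₀) 2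
  have hq1 : ∀ k : Fin (m+1) → ℤ, k ≠ 0 → (1:ℝ) ≤ ∑ j, ((k j : ℝ)) ^ 2 := by
    intro k hk
    obtain ⟨j, hj⟩ := Function.ne_iff.mp hk
    have h1 : (1:ℝ) ≤ ((k j : ℝ)) ^ 2 := by
      have h2 : (1:ℝ) ≤ ((|k j| : ℤ) : ℝ) := by exact_mod_cast Int.one_le_abs hj
      rw [Int.cast_abs] at h2
      rw [← sq_abs]
      nlinarith
    exact le_trans h1 (Finset.single_le_sum (f := fun j => ((k j : ℝ)) ^ 2)
      (fun j _ => sq_nonneg _) (Finset.mem_univ j))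
  have hSpos : ∀ k : Fin (m+1) → ℤ, k ≠ 0 →
      (0:ℝ) < ∑ i : Fin ℓ, (∑ j, (Fin.cons 1 (β i) : Fin (m+1) → ℝ) j * (k j : ℝ)) ^ 2 := by
    intro k hk
    have hkey := my_key m ℓ hℓ hm β c hc hbad k hk
    have hnn : (0:ℝ) ≤ ∑ i : Fin ℓ, (∑ j, (Fin.cons 1 (β i) : Fin (m+1) → ℝ) j * (k j : ℝ)) ^ 2 :=
      Finset.sum_nonneg fun i _ => sq_nonneg _
    rcases hnn.lt_or_eq with hpos | hzero
    · exact hpos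
    · exfalso
      rw [← hzero, zero_pow (by omega : ℓ ≠ 0), mul_zero] at hkey
      linarith
  have hG : 0 < gradSq a := by
    have h1 : g k₀ ≤ gradSq a := Summable.le_tsum hgs k₀ (fun k _ => hg0 k)
    have h2 : 0 < g k₀ := mul_pos (lt_of_lt_of_le one_pos (hq1 k₀ hk₀0)) hp₀
    linarith
  have hH : 0 < ∑' k, h k := by
    have h1 : h k₀ ≤ ∑' k, h k := Summable.le_tsum hhs k₀ (fun k _ => hh0 k)
    have h2 : 0 < h k₀ := mul_pos (hSpos k₀ hk₀0) hp₀
    linarith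
  -- step 1 : pointwise bound
  set E : ℝ := C₀ ^ ((1:ℝ) / ((m:ℝ) + ℓ)) with hEdef
  have hE : 0 < E := Real.rpow_pos_of_pos hC₀ _
  have step1 : ∀ k, E * ‖a k‖ ^ 2 ≤ g k ^ θ * h k ^ (1 - θ) := by
    intro k
    by_cases hak : a k = 0
    · rw [hak]
      simp only [norm_zero]
      rw [zero_pow (by omega : 2 ≠ 0), mul_zero]
      exact mul_nonneg (Real.rpow_nonneg (hg0 k) _) (Real.rpow_nonneg (hh0 k) _)
    · have hk : k ≠ 0 := fun e => hak (by rw [e, ha0])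
      have hp : (0:ℝ) < ‖a k‖ ^ 2 := pow_pos (norm_pos_iff.mpr hak) 2
      have hA1 : (1:ℝ) ≤ ∑ j, ((k j : ℝ)) ^ 2 := hq1 k hk
      have hA0 : (0:ℝ) < ∑ j, ((k j : ℝ)) ^ 2 := lt_of_lt_of_le one_pos hA1
      have hB0 := hSpos k hk
      have hkey := my_key m ℓ hℓ hm β c hc hbad k hk
      have h1 : E ≤ (∑ j, ((k j : ℝ)) ^ 2) ^ θ *
          (∑ i : Fin ℓ, (∑ j, (Fin.cons 1 (β i) : Fin (m+1) → ℝ) j * (k j : ℝ)) ^ 2) ^ (1 - θ) := by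
        have h2 := Real.rpow_le_rpow hC₀.le hkey (by positivity : (0:ℝ) ≤ 1 / ((m:ℝ) + ℓ))
        rw [Real.mul_rpow (pow_nonneg hA0.le m) (pow_nonneg hB0.le ℓ),
          ← Real.rpow_natCast (∑ j, ((k j : ℝ)) ^ 2) m,
          ← Real.rpow_natCast (∑ i : Fin ℓ, (∑ j, (Fin.cons 1 (β i) : Fin (m+1) → ℝ) j * (k j : ℝ)) ^ 2) ℓ,
          ← Real.rpow_mul hA0.le, ← Real.rpow_mul hB0.le] at h2
        have e1 : (m:ℝ) * (1 / ((m:ℝ) + ℓ)) = θ := by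
          rw [hθdef]; field_simp; try ring
        have e2 : (ℓ:ℝ) * (1 / ((m:ℝ) + ℓ)) = 1 - θ := by
          rw [hθdef]; field_simp; try ring
        rw [e1, e2] at h2
        exact h2
      have e3 : (‖a k‖ ^ 2 : ℝ) ^ θ * (‖a k‖ ^ 2 : ℝ) ^ (1 - θ) = ‖a k‖ ^ 2 := by
        rw [← Real.rpow_add hp]
        norm_num
      calc E * ‖a k‖ ^ 2
          ≤ ((∑ j, ((k j : ℝ)) ^ 2) ^ θ *
              (∑ i : Fin ℓ, (∑ j, (Fin.cons 1 (β i) : Fin (m+1) → ℝ) j * (k j : ℝ)) ^ 2) ^ (1 - θ)) * ‖a k‖ ^ 2 :=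
            mul_le_mul_of_nonneg_right h1 hp.le
        _ = ((∑ j, ((k j : ℝ)) ^ 2) ^ θ * (‖a k‖ ^ 2 : ℝ) ^ θ) *
              ((∑ i : Fin ℓ, (∑ j, (Fin.cons 1 (β i) : Fin (m+1) → ℝ) j * (k j : ℝ)) ^ 2) ^ (1 - θ) *
                (‖a k‖ ^ 2 : ℝ) ^ (1 - θ)) := by
            rw [show ((∑ j, ((k j : ℝ)) ^ 2) ^ θ * (‖a k‖ ^ 2 : ℝ) ^ θ) *
              ((∑ i : Fin ℓ, (∑ j, (Fin.cons 1 (β i) : Fin (m+1) → ℝ) j * (k j : ℝ)) ^ 2) ^ (1 - θ) *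
                (‖a k‖ ^ 2 : ℝ) ^ (1 - θ)) =
              ((∑ j, ((k j : ℝ)) ^ 2) ^ θ *
              (∑ i : Fin ℓ, (∑ j, (Fin.cons 1 (β i) : Fin (m+1) → ℝ) j * (k j : ℝ)) ^ 2) ^ (1 - θ)) *
              ((‖a k‖ ^ 2 : ℝ) ^ θ * (‖a k‖ ^ 2 : ℝ) ^ (1 - θ)) from by ring, e3]
        _ = g k ^ θ * h k ^ (1 - θ) := by
            rw [hgdef, hhdef]
            rw [Real.mul_rpow hA0.le hp.le, Real.mul_rpow hB0.le hp.le]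
      done
  -- step 4
  have hsum1 : Summable (fun k => g k ^ θ * h k ^ (1 - θ)) :=
    my_holder_summable g h θ hθ0.le hθ1.le hg0 hh0 hgs hhs hG hH
  have step4 : E * normSq a ≤ (gradSq a) ^ θ * (∑' k, h k) ^ (1 - θ) := by
    have h1 : E * normSq a = ∑' k, E * ‖a k‖ ^ 2 := by
      rw [tsum_mul_left]
      rfl
    rw [h1]
    calc ∑' k, E * ‖a k‖ ^ 2 ≤ ∑' k, g k ^ θ * h k ^ (1 - θ) :=
          Summable.tsum_le_tsum step1 (hsum.mul_left E) hsum1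
      _ ≤ (∑' k, g k) ^ θ * (∑' k, h k) ^ (1 - θ) :=
          my_holder g h θ hθ0.le hθ1.le hg0 hh0 hgs hhs hG hH
      _ = (gradSq a) ^ θ * (∑' k, h k) ^ (1 - θ) := rfl
  -- step 5
  have step5 : C₀ * normSq a ^ (m + ℓ) ≤ gradSq a ^ m * (∑' k, h k) ^ ℓ := by
    have h5 := pow_le_pow_left₀ (mul_nonneg hE.le hN0) step4 (m + ℓ)
    rw [mul_pow] at h5
    have eE : E ^ (m + ℓ) = C₀ := by
      rw [hEdef, ← Real.rpow_natCast (C₀ ^ ((1:ℝ) / ((m:ℝ) + ℓ))) (m + ℓ), ← Real.rpow_mul hC₀.le]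
      rw [show (1 / ((m:ℝ) + ℓ)) * ((m + ℓ : ℕ) : ℝ) = 1 from by push_cast; field_simp]
      exact Real.rpow_one C₀
    have eG : (gradSq a ^ θ * (∑' k, h k) ^ (1 - θ)) ^ (m + ℓ) = gradSq a ^ m * (∑' k, h k) ^ ℓ := by
      rw [mul_pow, ← Real.rpow_natCast (gradSq a ^ θ) (m + ℓ), ← Real.rpow_natCast ((∑' k, h k) ^ (1 - θ)) (m + ℓ),
        ← Real.rpow_mul hG.le, ← Real.rpow_mul hH.le]
      rw [show θ * ((m + ℓ : ℕ) : ℝ) = ((m : ℕ) : ℝ) from by rw [hθdef]; push_cast; field_simp; try ring,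
        show (1 - θ) * ((m + ℓ : ℕ) : ℝ) = ((ℓ : ℕ) : ℝ) from by rw [hθdef]; push_cast; field_simp; try ring]
      rw [Real.rpow_natCast, Real.rpow_natCast]
    rw [eE, eG] at h5
    exact h5
  -- step 6 : take square roots and conclude
  have step6 : Real.sqrt C₀ * Real.sqrt (normSq a) ^ (m + ℓ)
      ≤ Real.sqrt (gradSq a) ^ m * Real.sqrt (∑' k, h k) ^ ℓ := by
    have h6 := Real.sqrt_le_sqrt step5
    rwa [Real.sqrt_mul hC₀.le, Real.sqrt_mul (pow_nonneg hG.le m), my_sqrt_pow _ hN0,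
      my_sqrt_pow _ hG.le, my_sqrt_pow _ hH.le] at h6
  have step7 : Real.sqrt (∑' k, h k) ≤ ∑ i : Fin ℓ, Real.sqrt (dirSq (Fin.cons 1 (β i)) a) := by
    rw [hH_eq]
    exact my_sqrt_sum_le _ (fun i => tsum_nonneg fun k => mul_nonneg (sq_nonneg _) (sq_nonneg _))
  calc Real.sqrt C₀ * Real.sqrt (normSq a) ^ (m + ℓ)
      ≤ Real.sqrt (gradSq a) ^ m * Real.sqrt (∑' k, h k) ^ ℓ := step6
    _ ≤ Real.sqrt (gradSq a) ^ m * (∑ i : Fin ℓ, Real.sqrt (dirSq (Fin.cons 1 (β i)) a)) ^ ℓ :=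
        mul_le_mul_of_nonneg_left (pow_le_pow_left₀ (Real.sqrt_nonneg _) step7 ℓ)
          (pow_nonneg (Real.sqrt_nonneg _) m)
end

section
/- Let α ∈ ℝ^d satisfy |⟨α, k⟩| ≥ c/|k|^{d−1} for all nonzero k ∈ ℤ^d, for some c > 0, and let s > 0. Then there exists c_α > 0 such that for all mean-zero f in the Sobolev space H^s(𝕋^d) ∩ H¹(𝕋^d): ‖∇^s f‖_{L²}^{(d−1)/s}·‖⟨∇f, α⟩‖_{L²} ≥ c_α·‖f‖_{L²}^{1+(d−1)/s}, where ‖∇^s f‖²_{L²} = (2π)^d Σ_k |k|^{2s}|aₖ|². -/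
open Real

/-- `‖∇^s f‖²_{L²(𝕋^d)} = (2π)^d Σ |k|^{2s} |aₖ|²` (modulo the factor `(2π)^d`). -/
noncomputable def fracSq {d : ℕ} (s : ℝ) (a : (Fin d → ℤ) → ℂ) : ℝ :=
  ∑' k, enorm' k ^ (2 * s) * ‖a k‖ ^ 2

lemma interp_aux (s t c N F D : ℝ) (hs : 0 < s) (ht : 0 ≤ t) (hc : 0 < c)
    (hN : 0 ≤ N) (hF : 0 < F) (hD : 0 < D)
    (h : ∀ R : ℝ, 0 < R → N ≤ R ^ (-(2*s)) * F + R ^ (2*t) / c^2 * D) :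
    N ^ ((s+t)/(2*s)) ≤ (2/c^2) ^ ((s+t)/(2*s)) * (c^2) ^ (t/(2*s))
      * (F ^ (t/(2*s)) * D ^ (1/2 : ℝ)) := by
  set p : ℝ := (s+t)/(2*s) with hp_def
  set e : ℝ := t/(2*s) with he_def
  have hst : 0 < s + t := by linarith
  have hp : 0 < p := div_pos hst (by linarith)
  set X : ℝ := c ^ 2 * F / D with hX_def
  have hX0 : 0 < X := by positivity
  set R : ℝ := X ^ (1 / (2 * (s + t))) with hR_def
  have hR0 : 0 < R := Real.rpow_pos_of_pos hX0 _
  have hu : R ^ (2 * t) = X ^ (t / (s + t)) := by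
    rw [hR_def, ← Real.rpow_mul hX0.le]
    congr 1; field_simp <;> ring
  have hv : R ^ (2 * s) = X ^ (s / (s + t)) := by
    rw [hR_def, ← Real.rpow_mul hX0.le]
    congr 1; field_simp <;> ring
  have huv : R ^ (2 * t) * R ^ (2 * s) = X := by
    rw [hu, hv, ← Real.rpow_add hX0,
      show t / (s + t) + s / (s + t) = 1 by field_simp <;> ring, Real.rpow_one]
  have hu0 : (0:ℝ) < R ^ (2*t) := Real.rpow_pos_of_pos hR0 _
  have hv0 : (0:ℝ) < R ^ (2*s) := Real.rpow_pos_of_pos hR0 _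
  have key2 : R ^ (-(2 * s)) * F = R ^ (2 * t) / c ^ 2 * D := by
    have hXD : X * D = c ^ 2 * F := by rw [hX_def]; field_simp
    have h3 : R ^ (2*t) * R ^ (2*s) * D = c ^ 2 * F := by rw [huv]; exact hXD
    rw [Real.rpow_neg hR0.le]
    field_simp
    linarith [h3]
  have hN2 : N ≤ 2 * (R ^ (2 * t) / c ^ 2 * D) := by
    have := h R hR0
    rw [key2] at this; linarith
  have hNp : N ^ p ≤ (2 * (R ^ (2 * t) / c ^ 2 * D)) ^ p :=
    Real.rpow_le_rpow hN hN2 hp.le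
  have hup : (R ^ (2 * t)) ^ p = (c ^ 2) ^ e * F ^ e / D ^ e := by
    rw [hu, ← Real.rpow_mul hX0.le,
      show t / (s + t) * p = e by rw [hp_def, he_def]; field_simp <;> ring,
      hX_def, Real.div_rpow (by positivity) hD.le,
      Real.mul_rpow (by positivity) hF.le]
  have hDp : D ^ p = D ^ e * D ^ (1/2 : ℝ) := by
    rw [← Real.rpow_add hD]
    congr 1
    rw [hp_def, he_def]; field_simp <;> ring
  have hrhs : (2 * (R ^ (2 * t) / c ^ 2 * D)) ^ p
      = (2/c^2) ^ p * (c^2) ^ e * (F ^ e * D ^ (1/2 : ℝ)) := by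
    rw [Real.mul_rpow (by norm_num) (by positivity),
      Real.mul_rpow (by positivity) hD.le,
      Real.div_rpow hu0.le (by positivity), hup, hDp,
      Real.div_rpow (by norm_num) (by positivity)]
    have hce : (0:ℝ) < (c^2 : ℝ) ^ e := by positivity
    have hde : (0:ℝ) < D ^ e := Real.rpow_pos_of_pos hD _
    have hcp : (0:ℝ) < (c^2 : ℝ) ^ p := by positivity
    field_simp
  rw [hrhs] at hNp
  exact hNp

lemma enorm'_nonneg {d : ℕ} (k : Fin d → ℤ) : 0 ≤ enorm' k := Real.sqrt_nonneg _

lemma one_le_enorm' {d : ℕ} {k : Fin d → ℤ} (hk : k ≠ 0) : 1 ≤ enorm' k := by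
  obtain ⟨j, hj⟩ := Function.ne_iff.mp hk
  have h1 : (1 : ℝ) ≤ ((k j : ℝ)) ^ 2 := by
    have : (1 : ℤ) ≤ |k j| := Int.one_le_abs (by simpa using hj)
    have h2 : (1 : ℝ) ≤ |(k j : ℝ)| := by exact_mod_cast this
    calc (1:ℝ) = 1 ^ 2 := by ring
    _ ≤ |(k j : ℝ)| ^ 2 := by apply pow_le_pow_left₀ zero_le_one h2
    _ = ((k j : ℝ)) ^ 2 := sq_abs _
  have h2 : ((k j : ℝ)) ^ 2 ≤ ∑ i, ((k i : ℝ)) ^ 2 :=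
    Finset.single_le_sum (f := fun i => ((k i : ℝ)) ^ 2)
      (fun i _ => sq_nonneg _) (Finset.mem_univ j)
  rw [enorm']
  exact (Real.le_sqrt zero_le_one (by positivity)).mpr (by nlinarith)

/-- Fractional version: if `|⟨α,k⟩| ≥ c/|k|^{d-1}` for all nonzero `k ∈ ℤ^d` and
`s > 0`, then `‖∇^s f‖^{(d-1)/s} ⬝ ‖⟨∇f,α⟩‖ ≥ c_α ‖f‖^{1+(d-1)/s}` for all
mean-zero `f ∈ H^s ∩ H¹(𝕋^d)`. -/
theorem stmt_17 (d : ℕ) (hd : 0 < d) (α : Fin d → ℝ) (c : ℝ) (hc : 0 < c)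
    (hα : ∀ k : Fin d → ℤ, k ≠ 0 → |∑ j, α j * k j| ≥ c / enorm' k ^ (d - 1))
    (s : ℝ) (hs : 0 < s) :
    ∃ cα > (0 : ℝ), ∀ a : (Fin d → ℤ) → ℂ, IsH1 a →
      Summable (fun k : Fin d → ℤ => enorm' k ^ (2 * s) * ‖a k‖ ^ 2) → a 0 = 0 →
      Real.sqrt (fracSq s a) ^ (((d : ℝ) - 1) / s) * Real.sqrt (dirSq α a)
        ≥ cα * Real.sqrt (normSq a) ^ (1 + ((d : ℝ) - 1) / s) := by
  have hd1 : (1:ℝ) ≤ (d:ℝ) := by exact_mod_cast hd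
  set t : ℝ := (d : ℝ) - 1 with ht_def
  have ht : 0 ≤ t := by simp only [ht_def]; linarith
  have hst : 0 < s + t := by linarith
  set p : ℝ := (s + t) / (2 * s) with hp_def
  set e : ℝ := t / (2 * s) with he_def
  have hp : 0 < p := div_pos hst (by linarith)
  set K : ℝ := (2 / c ^ 2) ^ p * (c ^ 2) ^ e with hK_def
  have hK : 0 < K := by positivity
  refine ⟨K⁻¹, by positivity, ?_⟩
  intro a hH1 hFs ha0
  obtain ⟨hNs, hGs⟩ := hH1
  have hDs : Summable (fun k : Fin d → ℤ => (∑ j, α j * k j) ^ 2 * ‖a k‖ ^ 2) := by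
    apply Summable.of_nonneg_of_le (fun k => by positivity)
      (fun k => ?_) (hGs.mul_left (∑ j, α j ^ 2))
    have h := Finset.sum_mul_sq_le_sq_mul_sq Finset.univ α (fun j => ((k j : ℝ)))
    have h0 : (0:ℝ) ≤ ‖a k‖ ^ 2 := by positivity
    calc (∑ j, α j * k j) ^ 2 * ‖a k‖ ^ 2
        ≤ ((∑ j, α j ^ 2) * ∑ j, ((k j : ℝ)) ^ 2) * ‖a k‖ ^ 2 :=
          mul_le_mul_of_nonneg_right h h0
      _ = (∑ j, α j ^ 2) * ((∑ j, ((k j : ℝ)) ^ 2) * ‖a k‖ ^ 2) := by ring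
  have hN0 : 0 ≤ normSq a := tsum_nonneg (fun k => by positivity)
  rcases eq_or_lt_of_le hN0 with hN | hNpos
  · rw [ge_iff_le, ← hN, Real.sqrt_zero, Real.zero_rpow (by positivity), mul_zero]
    positivity
  have hFN : normSq a ≤ fracSq s a := by
    apply Summable.tsum_le_tsum (fun k => ?_) hNs hFs
    rcases eq_or_ne (a k) 0 with h | h
    · simp [h]
    have hk : k ≠ 0 := by rintro rfl; exact h ha0
    have h1 : (1:ℝ) ≤ enorm' k ^ (2 * s) := by
      calc (1:ℝ) = 1 ^ (2*s) := (Real.one_rpow _).symm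
      _ ≤ enorm' k ^ (2*s) := Real.rpow_le_rpow zero_le_one (one_le_enorm' hk) (by linarith)
    nlinarith [sq_nonneg ‖a k‖]
  have hF0 : 0 < fracSq s a := lt_of_lt_of_le hNpos hFN
  have hD0 : 0 < dirSq α a := by
    obtain ⟨k0, hk0⟩ : ∃ k, a k ≠ 0 := by
      by_contra h
      push_neg at h
      rw [normSq] at hNpos
      simp [h] at hNpos
    have hk0' : k0 ≠ 0 := by rintro rfl; exact hk0 ha0
    have hE : 0 < enorm' k0 := lt_of_lt_of_le one_pos (one_le_enorm' hk0')
    have habs : 0 < |∑ j, α j * k0 j| :=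
      lt_of_lt_of_le (div_pos hc (pow_pos hE _)) (hα k0 hk0')
    have hpos : 0 < (∑ j, α j * k0 j) ^ 2 := by
      rw [← sq_abs]; exact pow_pos habs 2
    exact Summable.tsum_pos hDs (fun k => by positivity) k0
      (mul_pos hpos (pow_pos (norm_pos_iff.mpr hk0) 2))
  -- pointwise interpolation, for each R > 0
  have hbound : ∀ R : ℝ, 0 < R →
      normSq a ≤ R ^ (-(2*s)) * fracSq s a + R ^ (2*t) / c^2 * dirSq α a := by
    intro R hR0
    have key : ∀ k, ‖a k‖ ^ 2 ≤ R ^ (-(2 * s)) * (enorm' k ^ (2 * s) * ‖a k‖ ^ 2)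
        + (R ^ (2 * t) / c ^ 2) * ((∑ j, α j * k j) ^ 2 * ‖a k‖ ^ 2) := by
      intro k
      rcases eq_or_ne (a k) 0 with h | h
      · simp [h]
      have hk : k ≠ 0 := by rintro rfl; exact h ha0
      have hk1 : 1 ≤ enorm' k := one_le_enorm' hk
      have hE0 : 0 < enorm' k := lt_of_lt_of_le one_pos hk1
      have main : (1:ℝ) ≤ R ^ (-(2 * s)) * enorm' k ^ (2 * s)
          + (R ^ (2 * t) / c ^ 2) * (∑ j, α j * k j) ^ 2 := by
        rcases le_or_gt R (enorm' k) with hRk | hkR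
        · have h1 : R ^ (2*s) ≤ enorm' k ^ (2*s) :=
            Real.rpow_le_rpow hR0.le hRk (by linarith)
          have h2 : (1:ℝ) ≤ R ^ (-(2*s)) * enorm' k ^ (2*s) := by
            rw [Real.rpow_neg hR0.le, inv_mul_eq_div,
              le_div_iff₀ (Real.rpow_pos_of_pos hR0 _)]
            linarith
          have h3 : 0 ≤ (R ^ (2 * t) / c ^ 2) * (∑ j, α j * k j) ^ 2 := by positivity
          linarith
        · have hEp : 0 < enorm' k ^ (d - 1) := pow_pos hE0 _
          have h4 : c / enorm' k ^ (d - 1) ≤ |∑ j, α j * k j| := hα k hk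
          have h4' : c ≤ |∑ j, α j * k j| * enorm' k ^ (d - 1) :=
            (div_le_iff₀ hEp).mp h4
          have hsq : c ^ 2 / (enorm' k ^ (d - 1)) ^ 2 ≤ (∑ j, α j * k j) ^ 2 := by
            rw [← sq_abs (∑ j, α j * k j), div_le_iff₀ (by positivity)]
            nlinarith [abs_nonneg (∑ j, α j * k j), hEp, hc]
          have hpow : (enorm' k ^ (d - 1)) ^ 2 ≤ R ^ (2 * t) := by
            have h6 : enorm' k ^ (d-1) ≤ R ^ (d-1) :=
              pow_le_pow_left₀ hE0.le hkR.le _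
            have h7 : (enorm' k ^ (d-1))^2 ≤ (R ^ (d-1))^2 :=
              pow_le_pow_left₀ (by positivity) h6 _
            have h8 : (R ^ (d-1) : ℝ)^2 = R ^ (2 * t) := by
              rw [← pow_mul, ← Real.rpow_natCast R ((d-1)*2)]
              congr 1
              push_cast [Nat.cast_sub hd]
              simp only [ht_def]
              ring
            linarith [h8 ▸ h7]
          have hq : (1:ℝ) ≤ R ^ (2*t) / (enorm' k ^ (d - 1)) ^ 2 :=
            (one_le_div (by positivity)).mpr hpow
          have heq : (R ^ (2*t) / c^2) * (c^2 / (enorm' k ^ (d - 1)) ^ 2)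
              = R ^ (2*t) / (enorm' k ^ (d - 1)) ^ 2 := by
            field_simp
          have h10 : (R ^ (2 * t) / c ^ 2) * (c ^ 2 / (enorm' k ^ (d - 1)) ^ 2)
              ≤ (R ^ (2 * t) / c ^ 2) * (∑ j, α j * k j) ^ 2 :=
            mul_le_mul_of_nonneg_left hsq (by positivity)
          have h11 : (0:ℝ) ≤ R ^ (-(2*s)) * enorm' k ^ (2*s) := by positivity
          rw [heq] at h10
          linarith
      have hnn : (0:ℝ) ≤ ‖a k‖ ^ 2 := by positivity
      calc ‖a k‖ ^ 2 = 1 * ‖a k‖ ^ 2 := (one_mul _).symm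
      _ ≤ (R ^ (-(2 * s)) * enorm' k ^ (2 * s)
          + (R ^ (2 * t) / c ^ 2) * (∑ j, α j * k j) ^ 2) * ‖a k‖ ^ 2 :=
          mul_le_mul_of_nonneg_right main hnn
      _ = _ := by ring
    have h1 := Summable.tsum_le_tsum key hNs
      ((hFs.mul_left (R ^ (-(2 * s)))).add (hDs.mul_left (R ^ (2 * t) / c ^ 2)))
    rw [Summable.tsum_add (hFs.mul_left _) (hDs.mul_left _), tsum_mul_left, tsum_mul_left] at h1
    exact h1
  have hNp := interp_aux s t c (normSq a) (fracSq s a) (dirSq α a)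
    hs ht hc hN0 hF0 hD0 hbound
  rw [ge_iff_le, Real.sqrt_eq_rpow, Real.sqrt_eq_rpow, Real.sqrt_eq_rpow,
    ← Real.rpow_mul hF0.le, ← Real.rpow_mul hN0,
    show (1/2 : ℝ) * (t / s) = e by rw [he_def]; field_simp <;> ring,
    show (1/2 : ℝ) * (1 + t / s) = p by rw [hp_def]; field_simp <;> ring,
    inv_mul_le_iff₀ hK]
  calc normSq a ^ p ≤ (2/c^2) ^ p * (c^2) ^ e
      * (fracSq s a ^ e * dirSq α a ^ (1/2 : ℝ)) := hNp
  _ = K * (fracSq s a ^ e * dirSq α a ^ (1/2 : ℝ)) := by rw [hK_def]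
end
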